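/- Let G = (V,E) be a simple graph with n vertices and m edges, fix a bijection η : E → {1,…,m}, and let L be an assignment of finite color sets to the vertices of G. Then P(G,L) = Σ_{i=0}^{n−1} (−1)^i Σ_{{T₁,…,T_{n−i}} ∈ NBF_i(G)} ∏_{j=1}^{n−i} β(T_j), where the inner sum is over spanning forests of G whose edge set contains no broken cycle and has exactly i edges, with components T₁, …, T_{n−i}. -/

import Mathlib

open Finset

variable {V : Type*}

/-- The number of proper colorings of `G` using the colors `{1, …, k}`. -/
noncomputable def propCol (G : SimpleGraph V) (k : ℕ) : ℕ :=
  Set.ncard {f : V → ℕ | (∀ v, f v ∈ Finset.Icc 1 k) ∧ ∀ ⦃a b : V⦄, G.Adj a b → f a ≠ f b}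

/-- The number of `L`-colorings of `G`, for an assignment `L` of color lists. -/
noncomputable def listCol (G : SimpleGraph V) (L : V → Finset ℕ) : ℕ :=
  Set.ncard {f : V → ℕ | (∀ v, f v ∈ L v) ∧ ∀ ⦃a b : V⦄, G.Adj a b → f a ≠ f b}

/-- `α(uv) = |L(u) \ L(v)|`, symmetrized (when `|L(u)| = |L(v)|` one has
`|L(u) \ L(v)| = |L(v) \ L(u)|`, so this is exactly `|L(u) \ L(v)|`). -/
noncomputable def alphaL (L : V → Finset ℕ) : Sym2 V → ℕ :=
  Sym2.lift ⟨fun a b => ((L a) \ (L b)).card ⊔ ((L b) \ (L a)).card,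
    fun a b => by simp [sup_comm]⟩

/-- `B` is the edge set of a broken cycle of `G` with respect to the edge ordering `η`:
the edge set of a path `v₁v₂⋯v_r` of `G` with `r ≥ 3` such that `v₁v_r ∈ E(G)` and
`η(v₁v_r) < η(v_iv_{i+1})` for each `i`. -/
def IsBrokenCycle [DecidableEq V] (G : SimpleGraph V) (η : Sym2 V → ℕ)
    (B : Finset (Sym2 V)) : Prop :=
  ∃ (u w : V) (p : G.Walk u w), p.IsPath ∧ 2 ≤ p.length ∧ G.Adj u w ∧
    (∀ f ∈ p.edges, η s(u, w) < η f) ∧ B = p.edges.toFinset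

/-- `NB_i(G)`: the collection of `i`-element subsets of `E(G)` containing no broken cycle. -/
def NBset [DecidableEq V] (G : SimpleGraph V) (η : Sym2 V → ℕ) (i : ℕ) :
    Set (Finset (Sym2 V)) :=
  {A : Finset (Sym2 V) | ↑A ⊆ G.edgeSet ∧ A.card = i ∧
    ∀ B : Finset (Sym2 V), IsBrokenCycle G η B → ¬ B ⊆ A}

/-- `|NB_i(G)|`. -/
noncomputable def NBcard [DecidableEq V] (G : SimpleGraph V) (η : Sym2 V → ℕ) (i : ℕ) : ℕ :=
  Set.ncard (NBset G η i)

/-- `|NB_i(G, e)|`: the number of `i`-element subsets of `E(G)` that contain `e`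
and contain no broken cycle. -/
noncomputable def NBe [DecidableEq V] (G : SimpleGraph V) (η : Sym2 V → ℕ)
    (i : ℕ) (e : Sym2 V) : ℕ :=
  Set.ncard {A : Finset (Sym2 V) | A ∈ NBset G η i ∧ e ∈ A}

/-- `Q_η(G, e, x)`, where `n` is the number of vertices of `G`. -/
noncomputable def Qeta [DecidableEq V] [Fintype V] (G : SimpleGraph V)
    (η : Sym2 V → ℕ) (e : Sym2 V) (x : ℝ) : ℝ :=
  (∑ i ∈ (Finset.Icc 1 (Fintype.card V - 1)).filter (fun i => Odd i),
      (NBe G η i e : ℝ) / i * x ^ (Fintype.card V - i)) -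
  ∑ i ∈ (Finset.Icc 2 (Fintype.card V - 1)).filter (fun i => Even i),
      (NBe G η i e : ℝ) * x ^ (Fintype.card V - i)

/-- The contraction `G/e` of the edge `e = uv`: the vertex `v` is merged into `u`
(so `v` becomes an isolated vertex), loops are removed and parallel edges are merged. -/
def contractE (G : SimpleGraph V) (u v : V) : SimpleGraph V :=
  SimpleGraph.fromRel (fun a b =>
    (G.Adj a b ∧ a ≠ v ∧ b ≠ v) ∨ (a = u ∧ b ≠ v ∧ G.Adj v b))

/-- The number of triangles (3-cliques) of `H`. -/
noncomputable def triangleCount (H : SimpleGraph V) : ℕ :=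
  Set.ncard {s : Finset V | H.IsNClique 3 s}

/-- `|NB₂(H)| = C(|E(H)|, 2) − △(H)`: the number of 2-element subsets of `E(H)`
containing no broken cycle (this count is independent of the edge ordering). -/
noncomputable def NB2 (H : SimpleGraph V) : ℕ :=
  Nat.choose (H.edgeSet.ncard) 2 - triangleCount H

/-- `C` is the edge set of a 4-cycle of `G`. -/
def IsFourCycle [DecidableEq V] (G : SimpleGraph V) (C : Finset (Sym2 V)) : Prop :=
  ∃ (u : V) (p : G.Walk u u), p.IsCycle ∧ p.length = 4 ∧ C = p.edges.toFinset

/-- The number of 4-cycles of `G` containing the edge `e`. -/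
noncomputable def fourCyclesOn [DecidableEq V] (G : SimpleGraph V) (e : Sym2 V) : ℕ :=
  Set.ncard {C : Finset (Sym2 V) | IsFourCycle G C ∧ e ∈ C}

/-- `c₄(G)`: the maximum over edges `e` of the number of 4-cycles of `G` containing `e`,
i.e. the least `r` such that every edge lies in at most `r` 4-cycles. -/
noncomputable def c4 [DecidableEq V] (G : SimpleGraph V) : ℕ :=
  sSup {r : ℕ | ∃ e ∈ G.edgeSet, r = fourCyclesOn G e}

/-- `β(T)` for the connected component `c` of `H`: the number of colors lying in every
list `L w` for `w` a vertex of the component `c`. -/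
noncomputable def betaComp (L : V → Finset ℕ) (H : SimpleGraph V)
    (c : H.ConnectedComponent) : ℕ :=
  Set.ncard {x : ℕ | ∀ w : V, H.connectedComponentMk w = c → x ∈ L w}

/-- `∏_j β(T_j)` over the connected components `T_j` of the spanning subgraph `H`. -/
noncomputable def betaProd (L : V → Finset ℕ) (H : SimpleGraph V) : ℕ :=
  ∏ᶠ c : H.ConnectedComponent, betaComp L H c

/-!
Inclusion–exclusion over the set of monochromatic edges gives
`P(G, L) = ∑_{A ⊆ E} (-1)^|A| ∏_T β(T)` over the components `T` of `(V, A)`: an assignment from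
the lists that is constant on every edge of `A` is constant on each component `T`, with a value
common to all lists of `T`.

If `A` contains a broken cycle, let `e` be the edge of least `η` whose ends are joined inside `A`
by edges later than `e`. Toggling `e` in `A` changes neither the components of `(V, A)` nor this
choice of `e`, so these terms cancel in pairs. The sets that remain contain no broken cycle; adding
their edges in decreasing order of `η` never closes a cycle, so they are forests and have fewer
than `n` edges.
-/

open scoped symmDiff
open SimpleGraph

section SymmDiffSingleton

variable {α : Type*} [DecidableEq α] {A : Finset α} {e : α}

theorem Finset.erase_subset_symmDiff_singleton : A.erase e ⊆ A ∆ {e} := by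
  intro x
  simp only [mem_erase, mem_symmDiff, mem_singleton]
  tauto

theorem Finset.symmDiff_singleton_subset_insert : A ∆ {e} ⊆ insert e A := by
  intro x
  simp only [mem_insert, mem_symmDiff, mem_singleton]
  tauto

theorem Finset.symmDiff_singleton_ne_self : A ∆ {e} ≠ A := by
  rw [Ne, symmDiff_eq_left]
  exact singleton_ne_empty e

theorem Finset.neg_one_pow_card_symmDiff_singleton : (-1 : ℤ) ^ #(A ∆ {e}) = -(-1) ^ #A := by
  by_cases he : e ∈ A
  · have : A ∆ {e} = A.erase e := by
      ext x
      simp only [mem_erase, mem_symmDiff, mem_singleton]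
      grind
    rw [this, ← card_erase_add_one he, pow_succ, mul_neg_one, neg_neg]
  · have : A ∆ {e} = insert e A := by
      ext x
      simp only [mem_insert, mem_symmDiff, mem_singleton]
      grind
    rw [this, card_insert_of_notMem he, pow_succ, mul_neg_one]

end SymmDiffSingleton

section Reachability

variable {G H₁ H₂ : SimpleGraph V} {S T : Set (Sym2 V)} {u w : V}

theorem SimpleGraph.reachable_le_of_adj_reachable (h : ∀ ⦃a b⦄, H₁.Adj a b → H₂.Reachable a b) :
    H₁.Reachable ≤ H₂.Reachable := by
  rw [reachable_eq_reflTransGen, reachable_eq_reflTransGen]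
  exact fun _ _ hab => hab.lift' id fun a b h' => (reachable_iff_reflTransGen a b).1 (h h')

theorem SimpleGraph.Walk.reachable_fromEdgeSet (p : G.Walk u w) (hp : ∀ e ∈ p.edges, e ∈ S) :
    (fromEdgeSet S).Reachable u w :=
  ⟨p.transfer _ fun e he => by
    rw [edgeSet_fromEdgeSet]
    exact ⟨hp e he, G.not_isDiag_of_mem_edgeSet (p.edges_subset_edgeSet he)⟩⟩

theorem SimpleGraph.reachable_fromEdgeSet_insert (h : (fromEdgeSet S).Reachable u w) :
    (fromEdgeSet (insert s(u, w) S)).Reachable = (fromEdgeSet S).Reachable := by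
  refine le_antisymm (reachable_le_of_adj_reachable fun a b hab => ?_)
    (Reachable.mono' (fromEdgeSet_mono (Set.subset_insert _ _)))
  rw [fromEdgeSet_adj, Set.mem_insert_iff] at hab
  obtain ⟨hab | hab, hne⟩ := hab
  · rcases Sym2.eq_iff.1 hab with ⟨rfl, rfl⟩ | ⟨rfl, rfl⟩
    exacts [h, h.symm]
  · exact Adj.reachable ((fromEdgeSet_adj _).2 ⟨hab, hne⟩)

theorem SimpleGraph.reachable_fromEdgeSet_eq_of_subset_of_subset_insert
    (h : (fromEdgeSet S).Reachable u w) (hST : S ⊆ T) (hT : T ⊆ insert s(u, w) S) :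
    (fromEdgeSet T).Reachable = (fromEdgeSet S).Reachable :=
  le_antisymm ((Reachable.mono' (fromEdgeSet_mono hT)).trans (reachable_fromEdgeSet_insert h).le)
    (Reachable.mono' (fromEdgeSet_mono hST))

theorem SimpleGraph.forall_reachable_fromEdgeSet_imp_eq_iff {α : Type*} {f : V → α} :
    (∀ a b, (fromEdgeSet S).Reachable a b → f a = f b) ↔ ∀ e ∈ S, (e.map f).IsDiag := by
  constructor
  · rintro h ⟨a, b⟩ he
    rw [Sym2.map_mk, Sym2.mk_isDiag_iff]
    by_cases hab : a = b
    · rw [hab]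
    · exact h a b (Adj.reachable ((fromEdgeSet_adj _).2 ⟨he, hab⟩))
  · rintro h a b ⟨p⟩
    induction p with
    | nil => rfl
    | cons hadj _ ih =>
      rw [fromEdgeSet_adj] at hadj
      exact (Sym2.mk_isDiag_iff.1 (h _ hadj.1)).trans ih

end Reachability

section Beta

variable (L : V → Finset ℕ)

theorem betaProd_congr {H₁ H₂ : SimpleGraph V} (h : H₁.Reachable = H₂.Reachable) :
    betaProd L H₁ = betaProd L H₂ := by
  -- `H.ConnectedComponent` is `Quot H.Reachable`, so `betaProd L H` is a function of `H.Reachable`.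
  change (fun r : V → V → Prop => ∏ᶠ c : Quot r, Set.ncard {x | ∀ w, Quot.mk r w = c → x ∈ L w})
    H₁.Reachable = _
  rw [h]
  rfl

def componentColoringEquiv (H : SimpleGraph V) :
    (∀ c : H.ConnectedComponent, {x // ∀ w, H.connectedComponentMk w = c → x ∈ L w}) ≃
      {f : V → ℕ | (∀ v, f v ∈ L v) ∧ ∀ a b, H.Reachable a b → f a = f b} where
  toFun g := ⟨fun v => g (H.connectedComponentMk v), fun v => (g _).2 v rfl,
    fun _ _ hab => congrArg (fun c => (g c).1) (ConnectedComponent.eq.2 hab)⟩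
  invFun f c := ⟨c.lift f.1 fun v w p _ => f.2.2 v w p.reachable, fun w hw => by
    subst hw
    exact f.2.1 w⟩
  left_inv g := funext fun c => c.ind fun _ => rfl
  right_inv _ := rfl

theorem ncard_constant_on_components_eq_betaProd [Finite V] (H : SimpleGraph V) :
    {f : V → ℕ | (∀ v, f v ∈ L v) ∧ ∀ a b, H.Reachable a b → f a = f b}.ncard =
      betaProd L H := by
  have := Fintype.ofFinite H.ConnectedComponent
  rw [← Nat.card_coe_set_eq, ← Nat.card_congr (componentColoringEquiv L H), Nat.card_pi,
    betaProd, finprod_eq_prod_of_fintype]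
  rfl

end Beta

theorem Finset.card_filter_forall_not_eq_sum_powerset {α ι : Type*} [DecidableEq ι] (s : Finset α)
    (E : Finset ι) (P : ι → α → Prop) [∀ i, DecidablePred (P i)] :
    (#{x ∈ s | ∀ i ∈ E, ¬P i x} : ℤ) =
      ∑ A ∈ E.powerset, (-1 : ℤ) ^ #A * #{x ∈ s | ∀ i ∈ A, P i x} := by
  have hx (x : α) : (if ∀ i ∈ E, ¬P i x then 1 else 0 : ℤ) =
      ∑ A ∈ E.powerset, if ∀ i ∈ A, P i x then (-1 : ℤ) ^ #A else 0 := by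
    have : {A ∈ E.powerset | ∀ i ∈ A, P i x} = {i ∈ E | P i x}.powerset := by
      ext A
      simp only [mem_filter, mem_powerset, subset_iff]
      grind
    rw [← sum_filter, this, sum_powerset_neg_one_pow_card]
    simp only [filter_eq_empty_iff]
  calc (#{x ∈ s | ∀ i ∈ E, ¬P i x} : ℤ)
      = ∑ x ∈ s, ∑ A ∈ E.powerset, if ∀ i ∈ A, P i x then (-1 : ℤ) ^ #A else 0 := by
        simp only [card_filter, Nat.cast_sum, Nat.cast_ite, Nat.cast_one, Nat.cast_zero, hx]
    _ = _ := by
        rw [sum_comm]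
        simp only [← sum_filter, sum_const, nsmul_eq_mul, mul_comm]

section ListColorings

variable [Fintype V] [DecidableEq V] (L : V → Finset ℕ)

theorem listCol_eq_card_filter (G : SimpleGraph V) [DecidableRel G.Adj] :
    listCol G L = #{f ∈ Fintype.piFinset L | ∀ e ∈ G.edgeFinset, ¬(e.map f).IsDiag} := by
  rw [listCol, ← Set.ncard_coe_finset]
  congr 1
  ext f
  simp only [Set.mem_ofPred_eq, coe_filter, Fintype.mem_piFinset, mem_edgeFinset, Sym2.forall,
    mem_edgeSet, Sym2.map_mk, Sym2.mk_isDiag_iff]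

theorem card_filter_isDiag_eq_betaProd (A : Finset (Sym2 V)) :
    #{f ∈ Fintype.piFinset L | ∀ e ∈ A, (e.map f).IsDiag} =
      betaProd L (fromEdgeSet (A : Set (Sym2 V))) := by
  rw [← ncard_constant_on_components_eq_betaProd, ← Set.ncard_coe_finset]
  congr 1
  ext f
  simp only [coe_filter, Fintype.mem_piFinset, Set.mem_ofPred_eq,
    forall_reachable_fromEdgeSet_imp_eq_iff, mem_coe]

theorem listCol_eq_sum_powerset (G : SimpleGraph V) [DecidableRel G.Adj] :
    (listCol G L : ℤ) =
      ∑ A ∈ G.edgeFinset.powerset,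
        (-1) ^ #A * (betaProd L (fromEdgeSet (A : Set (Sym2 V))) : ℤ) := by
  rw [listCol_eq_card_filter]
  -- `convert` only bridges two `Decidable` instances of the filters (via `Fintype (Sym2 V)`).
  convert card_filter_forall_not_eq_sum_powerset (Fintype.piFinset L) G.edgeFinset
    (fun e (f : V → ℕ) => (e.map f).IsDiag) using 4
  convert (card_filter_isDiag_eq_betaProd L _).symm

end ListColorings

section BrokenChords

variable {G : SimpleGraph V} {η : Sym2 V → ℕ} {A X : Finset (Sym2 V)} {e : Sym2 V}

/-- `e` is the edge `v₁v_r` of a broken cycle inside `A`; the path `v₁⋯v_r` is replaced by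
reachability through the edges of `A` that come after `e`. -/
def ClosesBrokenCycle (η : Sym2 V → ℕ) (A : Finset (Sym2 V)) (e : Sym2 V) : Prop :=
  ∃ u w, e = s(u, w) ∧ (fromEdgeSet {f | f ∈ A ∧ η e < η f}).Reachable u w

def brokenChords (G : SimpleGraph V) (η : Sym2 V → ℕ) (A : Finset (Sym2 V)) : Set (Sym2 V) :=
  {e ∈ G.edgeSet | ClosesBrokenCycle η A e}

theorem ClosesBrokenCycle.mono (hAX : A ⊆ X) (h : ClosesBrokenCycle η A e) :
    ClosesBrokenCycle η X e := by
  obtain ⟨u, w, rfl, h⟩ := h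
  exact ⟨u, w, rfl, h.mono (fromEdgeSet_mono fun f hf => ⟨hAX hf.1, hf.2⟩)⟩

theorem brokenChords_mono (hAX : A ⊆ X) : brokenChords G η A ⊆ brokenChords G η X :=
  fun _ he => ⟨he.1, he.2.mono hAX⟩

theorem exists_isBrokenCycle_subset_iff [DecidableEq V] (hA : (A : Set (Sym2 V)) ⊆ G.edgeSet) :
    (∃ B, IsBrokenCycle G η B ∧ B ⊆ A) ↔ (brokenChords G η A).Nonempty := by
  constructor
  · rintro ⟨B, ⟨u, w, p, -, -, huw, hlt, rfl⟩, hBA⟩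
    exact ⟨s(u, w), huw, u, w, rfl,
      p.reachable_fromEdgeSet fun f hf => ⟨hBA (List.mem_toFinset.2 hf), hlt f hf⟩⟩
  · rintro ⟨e, he, u, w, rfl, hr⟩
    set F := fromEdgeSet {f | f ∈ A ∧ η s(u, w) < η f}
    have hFG : F ≤ G := (fromEdgeSet_le G).2 fun f hf => hA hf.1.1
    obtain ⟨q, hq⟩ := hr.exists_isPath
    have hq_edges (f : Sym2 V) (hf : f ∈ q.edges) : f ∈ A ∧ η s(u, w) < η f := by
      have := q.edges_subset_edgeSet hf
      rw [edgeSet_fromEdgeSet] at this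
      exact this.1
    have hlen : 2 ≤ q.length := by
      have h₀ : q.length ≠ 0 := fun h => G.irrefl (Walk.eq_of_length_eq_zero h ▸ he)
      have h₁ : q.length ≠ 1 := fun h =>
        lt_irrefl _ ((fromEdgeSet_adj _).1 (Walk.adj_of_length_eq_one h)).1.2
      omega
    refine ⟨(q.mapLe hFG).edges.toFinset,
      ⟨u, w, q.mapLe hFG, hq.mapLe hFG, ?_, he, ?_, rfl⟩, ?_⟩
    · rwa [Walk.length_mapLe]
    · simpa [Walk.edges_mapLe_eq_edges] using fun f hf => (hq_edges f hf).2
    · simpa [Walk.edges_mapLe_eq_edges, subset_iff] using fun f hf => (hq_edges f hf).1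

end BrokenChords

section Cancellation

variable [DecidableEq V] {G : SimpleGraph V} {η : Sym2 V → ℕ} {A X : Finset (Sym2 V)}
  {e : Sym2 V}

theorem ClosesBrokenCycle.reachable_eq (he : ClosesBrokenCycle η A e) (h₁ : A.erase e ⊆ X)
    (h₂ : X ⊆ insert e A) :
    (fromEdgeSet (X : Set (Sym2 V))).Reachable =
      (fromEdgeSet (A.erase e : Set (Sym2 V))).Reachable := by
  obtain ⟨u, w, rfl, hr⟩ := he
  refine reachable_fromEdgeSet_eq_of_subset_of_subset_insert
    (hr.mono (fromEdgeSet_mono fun f hf => ?_)) (coe_subset.2 h₁) fun f hf => ?_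
  · exact mem_erase.2 ⟨fun h => (h ▸ hf.2).false, hf.1⟩
  · rcases mem_insert.1 (h₂ hf) with rfl | hf'
    · exact Set.mem_insert _ _
    · by_cases h : f = s(u, w)
      · exact h ▸ Set.mem_insert _ _
      · exact Set.mem_insert_of_mem _ (mem_erase.2 ⟨h, hf'⟩)

theorem betaProd_symmDiff_singleton (L : V → Finset ℕ) (he : ClosesBrokenCycle η A e) :
    betaProd L (fromEdgeSet ((A ∆ {e} : Finset (Sym2 V)) : Set (Sym2 V))) =
      betaProd L (fromEdgeSet (A : Set (Sym2 V))) :=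
  betaProd_congr L <| (he.reachable_eq erase_subset_symmDiff_singleton
    symmDiff_singleton_subset_insert).trans
      (he.reachable_eq (erase_subset e A) (subset_insert e A)).symm

theorem brokenChords_eq_of_erase_subset_of_subset_insert (he : e ∈ brokenChords G η A)
    (hmin : ∀ f ∈ brokenChords G η A, η e ≤ η f) (h₁ : A.erase e ⊆ X) (h₂ : X ⊆ insert e A) :
    brokenChords G η X = brokenChords G η A := by
  ext f
  refine and_congr_right fun hf => ?_
  rcases le_or_gt (η e) (η f) with hef | hfe
  · have : {g | g ∈ X ∧ η f < η g} = {g | g ∈ A ∧ η f < η g} := by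
      ext g
      refine and_congr_left fun hfg => ?_
      have hg : g ≠ e := by
        rintro rfl
        omega
      exact ⟨fun hgX => (mem_insert.1 (h₂ hgX)).resolve_left hg,
        fun hgA => h₁ (mem_erase.2 ⟨hg, hgA⟩)⟩
    simp only [ClosesBrokenCycle, this]
  · have hA : ¬ClosesBrokenCycle η A f := fun h => (hmin f ⟨hf, h⟩).not_gt hfe
    refine iff_of_false (fun hX => hA ?_) hA
    obtain ⟨u, w, rfl, hr⟩ := hX
    obtain ⟨a, b, rfl, hab⟩ := he.2
    have hab' : (fromEdgeSet {g | g ∈ A ∧ η s(u, w) < η g}).Reachable a b :=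
      hab.mono (fromEdgeSet_mono fun g hg => ⟨hg.1, hfe.trans hg.2⟩)
    refine ⟨u, w, rfl, ?_⟩
    rw [← reachable_fromEdgeSet_insert hab']
    refine hr.mono (fromEdgeSet_mono fun g hg => ?_)
    rcases mem_insert.1 (h₂ hg.1) with rfl | hgA
    exacts [Set.mem_insert _ _, Set.mem_insert_of_mem _ ⟨hgA, hg.2⟩]

end Cancellation

theorem sum_powerset_filter_brokenChords_nonempty_eq_zero [Fintype V] [DecidableEq V]
    (G : SimpleGraph V) [DecidableRel G.Adj] (η : Sym2 V → ℕ) (L : V → Finset ℕ)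
    [DecidablePred fun A : Finset (Sym2 V) => (brokenChords G η A).Nonempty] :
    ∑ A ∈ G.edgeFinset.powerset with (brokenChords G η A).Nonempty,
      (-1) ^ #A * (betaProd L (fromEdgeSet (A : Set (Sym2 V))) : ℤ) = 0 := by
  set c := fun A (h : (brokenChords G η A).Nonempty) => Function.argminOn η _ h
  have hc_mem A h : c A h ∈ brokenChords G η A := Function.argminOn_mem η _ h
  have hc_chords A h : brokenChords G η (A ∆ {c A h}) = brokenChords G η A :=
    brokenChords_eq_of_erase_subset_of_subset_insert (hc_mem A h)
      (fun _ hf => Function.argminOn_le η _ hf) erase_subset_symmDiff_singleton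
      symmDiff_singleton_subset_insert
  refine sum_involution (fun A hA => A ∆ {c A (mem_filter.1 hA).2}) (fun A hA => ?_)
    (fun A _ _ => symmDiff_singleton_ne_self) (fun A hA => ?_) (fun A hA => ?_)
  · rw [betaProd_symmDiff_singleton L (hc_mem A _).2, neg_one_pow_card_symmDiff_singleton]
    ring
  · obtain ⟨hAE, hA⟩ := mem_filter.1 hA
    refine mem_filter.2 ⟨mem_powerset.2 (symmDiff_singleton_subset_insert.trans
      (insert_subset (mem_edgeFinset.2 (hc_mem A hA).1) (mem_powerset.1 hAE))), ?_⟩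
    rwa [hc_chords]
  · simp only [c, hc_chords, symmDiff_symmDiff_cancel_right]

theorem SimpleGraph.IsAcyclic.ncard_edgeSet_lt [Finite V] [Nonempty V] {F : SimpleGraph V}
    (hF : F.IsAcyclic) : F.edgeSet.ncard < Nat.card V := by
  obtain ⟨T, hFT, -, hT⟩ := connected_top.exists_isTree_le_of_le_of_isAcyclic le_top hF
  have hT_card := (isTree_iff_connected_and_card.1 hT).2
  have hle : F.edgeSet.ncard ≤ T.edgeSet.ncard :=
    Set.ncard_le_ncard (edgeSet_mono hFT) (Set.toFinite _)
  rw [Nat.card_coe_set_eq] at hT_card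
  omega

section Forests

variable [DecidableEq V] {G : SimpleGraph V} {η : Sym2 V → ℕ} {A : Finset (Sym2 V)}

theorem isAcyclic_fromEdgeSet_of_brokenChords_eq_empty (hη : Set.InjOn η G.edgeSet)
    (hA : (A : Set (Sym2 V)) ⊆ G.edgeSet) (h : brokenChords G η A = ∅) :
    (fromEdgeSet (A : Set (Sym2 V))).IsAcyclic := by
  induction A using Finset.induction_on_min_value η with
  | empty => simp
  | insert e A heA hmin ih =>
    rw [coe_insert, Set.insert_subset_iff] at hA
    have hacyc := ih hA.2 (Set.subset_eq_empty (brokenChords_mono (subset_insert e A)) h)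
    have hlater : {f | f ∈ insert e A ∧ η e < η f} = A := by
      ext f
      refine ⟨fun ⟨hf, hlt⟩ => (mem_insert.1 hf).resolve_left (by rintro rfl; omega),
        fun hf => ⟨mem_insert_of_mem hf, (hmin f hf).lt_of_ne fun heq => ?_⟩⟩
      exact heA (hη hA.1 (hA.2 hf) heq ▸ hf)
    obtain ⟨u, w⟩ := e
    have hnr : ¬(fromEdgeSet (A : Set (Sym2 V))).Reachable u w := fun hr =>
      (Set.eq_empty_iff_forall_notMem.1 h) s(u, w) ⟨hA.1, u, w, rfl, hlater ▸ hr⟩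
    rw [coe_insert, Set.insert_eq, fromEdgeSet_union, sup_comm]
    exact hacyc.sup_edge_of_not_reachable hnr

theorem card_lt_of_brokenChords_eq_empty [Fintype V] [Nonempty V] (hη : Set.InjOn η G.edgeSet)
    (hA : (A : Set (Sym2 V)) ⊆ G.edgeSet) (h : brokenChords G η A = ∅) :
    #A < Fintype.card V := by
  have hdiag : (A : Set (Sym2 V)) \ Sym2.diagSet = A := sdiff_eq_left.2
    (Set.subset_compl_iff_disjoint_right.1 (hA.trans G.edgeSet_subset_compl_diagSet))
  have := (isAcyclic_fromEdgeSet_of_brokenChords_eq_empty hη hA h).ncard_edgeSet_lt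
  rwa [edgeSet_fromEdgeSet, hdiag, Set.ncard_coe_finset, Nat.card_eq_fintype_card] at this

end Forests

theorem NBset_eq_coe_filter [Fintype V] [DecidableEq V] (G : SimpleGraph V)
    [DecidableRel G.Adj] (η : Sym2 V → ℕ)
    [DecidablePred fun A : Finset (Sym2 V) => (brokenChords G η A).Nonempty] (i : ℕ) :
    NBset G η i =
      ↑{A ∈ {A ∈ G.edgeFinset.powerset | ¬(brokenChords G η A).Nonempty} | #A = i} := by
  ext A
  simp only [NBset, coe_filter, mem_filter, mem_powerset, Set.mem_ofPred_eq]
  rw [← coe_subset, coe_edgeFinset, and_assoc, and_comm (b := #A = i)]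
  refine and_congr_right fun hA => and_congr_right fun _ => ?_
  rw [← exists_isBrokenCycle_subset_iff hA]
  simp only [not_exists, not_and]

theorem stmt19_general [Fintype V] [DecidableEq V] [Nonempty V]
    (G : SimpleGraph V)
    (n m : ℕ) (hn : n = Fintype.card V)
    (η : Sym2 V → ℕ) (hη : Set.BijOn η G.edgeSet (Set.Icc 1 m))
    (L : V → Finset ℕ) :
    (listCol G L : ℤ) =
      ∑ i ∈ Finset.range n, (-1 : ℤ) ^ i *
        ∑ᶠ A ∈ NBset G η i,
          (betaProd L (SimpleGraph.fromEdgeSet (↑A : Set (Sym2 V))) : ℤ) := by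
  classical
  have hcard : ∀ A ∈ {A ∈ G.edgeFinset.powerset | ¬(brokenChords G η A).Nonempty},
      #A ∈ range n := fun A hA => by
    obtain ⟨hAE, hA⟩ := mem_filter.1 hA
    rw [mem_range, hn]
    exact card_lt_of_brokenChords_eq_empty hη.injOn
      (by rw [← coe_edgeFinset]; exact coe_subset.2 (mem_powerset.1 hAE))
      (Set.not_nonempty_iff_eq_empty.1 hA)
  rw [listCol_eq_sum_powerset,
    ← sum_filter_not_add_sum_filter _ fun A => (brokenChords G η A).Nonempty,
    sum_powerset_filter_brokenChords_nonempty_eq_zero, add_zero, ← sum_fiberwise_of_maps_to hcard]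
  refine sum_congr rfl fun i _ => ?_
  rw [NBset_eq_coe_filter, finsum_mem_coe_finset, mul_sum]
  exact sum_congr rfl fun A hA => by rw [(mem_filter.1 hA).2]

theorem stmt19 [Fintype V] [DecidableEq V] [Nonempty V]
    (G : SimpleGraph V) [DecidableRel G.Adj]
    (n m : ℕ) (hn : n = Fintype.card V) (hm : m = G.edgeFinset.card)
    (η : Sym2 V → ℕ) (hη : Set.BijOn η G.edgeSet (Set.Icc 1 m))
    (L : V → Finset ℕ) :
    (listCol G L : ℤ) =
      ∑ i ∈ Finset.range n, (-1 : ℤ) ^ i *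
        ∑ᶠ A ∈ NBset G η i,
          (betaProd L (SimpleGraph.fromEdgeSet (↑A : Set (Sym2 V))) : ℤ) :=
  stmt19_general G n m hn η hη L
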